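/- Let f : ℝⁿ → ℝ be differentiable, x ∈ Ω, μ̄ > 0, and let x̄ ∈ prox_{μ̄⁻¹g}(x − μ̄⁻¹∇f(x)). If supp(x) = supp(x̄) and supp(Bx) = supp(Bx̄), then x̄ equals the Euclidean projection of x − μ̄⁻¹∇f(x) onto the closed convex set Π(x), i.e., x̄ = proj_{Π(x)}(x − μ̄⁻¹∇f(x)); consequently μ̄[x − proj_{Π(x)}(x − μ̄⁻¹∇f(x))] = μ̄(x − x̄). -/
import Mathlib


open scoped Classical

noncomputable section

/-- The box `Ω = {x : l ≤ x ≤ u}` in ℝⁿ. -/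
def Om {n : ℕ} (l u : Fin n → ℝ) : Set (EuclideanSpace ℝ (Fin n)) :=
  {x | ∀ i, l i ≤ x i ∧ x i ≤ u i}

/-- The ℓ₀-norm (number of nonzero entries) of a vector. -/
def zeroNorm {m : ℕ} (v : Fin m → ℝ) : ℕ := (Function.support v).ncard

/-- `prox_{μ⁻¹ g}(z)`: the set of minimizers of `(μ/2)‖·−z‖² + λ₁‖B·‖₀ + λ₂‖·‖₀` over Ω. -/
def proxSet {n p : ℕ} (B : Matrix (Fin p) (Fin n) ℝ) (lam1 lam2 : ℝ) (l u : Fin n → ℝ)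
    (μ : ℝ) (z : EuclideanSpace ℝ (Fin n)) : Set (EuclideanSpace ℝ (Fin n)) :=
  {x | x ∈ Om l u ∧ ∀ y ∈ Om l u,
    μ / 2 * ‖x - z‖ ^ 2 + lam1 * (zeroNorm (B.mulVec x) : ℝ) + lam2 * (zeroNorm x : ℝ) ≤
    μ / 2 * ‖y - z‖ ^ 2 + lam1 * (zeroNorm (B.mulVec y) : ℝ) + lam2 * (zeroNorm y : ℝ)}

/-- `Π(z) = {x ∈ Ω : supp(x) ⊆ supp(z), supp(Bx) ⊆ supp(Bz)}`. -/
def PiSet {n p : ℕ} (B : Matrix (Fin p) (Fin n) ℝ) (l u : Fin n → ℝ)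
    (z : EuclideanSpace ℝ (Fin n)) : Set (EuclideanSpace ℝ (Fin n)) :=
  {x | x ∈ Om l u ∧ Function.support x ⊆ Function.support z ∧
    Function.support (B.mulVec x) ⊆ Function.support (B.mulVec z)}

/-- The Euclidean projection onto a (nonempty closed convex) set `S`: the unique point of `S`
nearest to `w`, selected by choice. -/
def projCC {n : ℕ} (S : Set (EuclideanSpace ℝ (Fin n))) (w : EuclideanSpace ℝ (Fin n)) :
    EuclideanSpace ℝ (Fin n) :=
  Classical.epsilon (fun y => y ∈ S ∧ ∀ z ∈ S, ‖y - w‖ ≤ ‖z - w‖)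

/-- if `x̄ ∈ prox_{μ̄⁻¹g}(x − μ̄⁻¹∇f(x))` and `supp(x) = supp(x̄)`,
`supp(Bx) = supp(Bx̄)`, then `x̄ = proj_{Π(x)}(x − μ̄⁻¹∇f(x))`; consequently
`μ̄[x − proj_{Π(x)}(x − μ̄⁻¹∇f(x))] = μ̄(x − x̄)`. -/
theorem stmt8 {n p : ℕ} (B : Matrix (Fin p) (Fin n) ℝ) (lam1 lam2 : ℝ)
    (hlam1 : 0 < lam1) (hlam2 : 0 < lam2)
    (l u : Fin n → ℝ) (hl : ∀ i, l i ≤ 0) (hu : ∀ i, 0 ≤ u i)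
    (f : EuclideanSpace ℝ (Fin n) → ℝ) (hf : Differentiable ℝ f)
    (x : EuclideanSpace ℝ (Fin n)) (hx : x ∈ Om l u)
    (mubar : ℝ) (hmubar : 0 < mubar)
    (xbar : EuclideanSpace ℝ (Fin n))
    (hxbar : xbar ∈ proxSet B lam1 lam2 l u mubar (x - mubar⁻¹ • gradient f x))
    (hsupp : Function.support x = Function.support xbar)
    (hsuppB : Function.support (B.mulVec x) = Function.support (B.mulVec xbar)) :
    xbar = projCC (PiSet B l u x) (x - mubar⁻¹ • gradient f x) ∧
      mubar • (x - projCC (PiSet B l u x) (x - mubar⁻¹ • gradient f x)) =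
        mubar • (x - xbar) := by
  set w := x - mubar⁻¹ • gradient f x with hw
  set S := PiSet B l u x with hSdef
  have hxbarS : xbar ∈ S := ⟨hxbar.1, by rw [hsupp], by rw [hsuppB]⟩
  have hmin : ∀ y ∈ S, ‖xbar - w‖ ≤ ‖y - w‖ := by
    intro y hy
    obtain ⟨hyΩ, hy1, hy2⟩ := hy
    have h1 : (zeroNorm y : ℝ) ≤ (zeroNorm xbar : ℝ) := by
      exact_mod_cast Set.ncard_le_ncard (hsupp ▸ hy1) (Set.toFinite _)
    have h2 : (zeroNorm (B.mulVec y) : ℝ) ≤ (zeroNorm (B.mulVec xbar) : ℝ) := by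
      exact_mod_cast Set.ncard_le_ncard (hsuppB ▸ hy2) (Set.toFinite _)
    have hp := hxbar.2 y hyΩ
    have hsq : ‖xbar - w‖ ^ 2 ≤ ‖y - w‖ ^ 2 := by nlinarith
    nlinarith [norm_nonneg (xbar - w), norm_nonneg (y - w)]
  have hex : ∃ y, y ∈ S ∧ ∀ z ∈ S, ‖y - w‖ ≤ ‖z - w‖ := ⟨xbar, hxbarS, hmin⟩
  have hspec := Classical.epsilon_spec hex
  set q := Classical.epsilon (fun y => y ∈ S ∧ ∀ z ∈ S, ‖y - w‖ ≤ ‖z - w‖) with hqdef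
  have hproj : projCC S w = q := rfl
  have heq : xbar = q := by
    have hd1 : ‖xbar - w‖ ≤ ‖q - w‖ := hmin q hspec.1
    have hd2 : ‖q - w‖ ≤ ‖xbar - w‖ := hspec.2 xbar hxbarS
    have hdd : ‖q - w‖ = ‖xbar - w‖ := le_antisymm hd2 hd1
    set m : EuclideanSpace ℝ (Fin n) := (2:ℝ)⁻¹ • (xbar + q) with hmdef
    have hmapp : ∀ i, m i = (2:ℝ)⁻¹ * (xbar i + q i) := fun i => rfl
    have hmS : m ∈ S := by
      refine ⟨?_, ?_, ?_⟩
      · intro i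
        have h1 := hxbar.1 i
        have h2 := hspec.1.1 i
        rw [hmapp]
        constructor <;> linarith [h1.1, h1.2, h2.1, h2.2]
      · intro i hi
        rw [Function.mem_support] at hi
        rw [hmapp] at hi
        by_cases hx1 : xbar i = 0
        · have : q i ≠ 0 := by intro h; apply hi; rw [hx1, h]; ring
          exact hspec.1.2.1 this
        · exact hsupp ▸ Function.mem_support.mpr hx1
      · have hBm : B.mulVec m = (2:ℝ)⁻¹ • (B.mulVec xbar + B.mulVec q) := by
          show B.mulVec ((2:ℝ)⁻¹ • (xbar + q) : Fin n → ℝ) = _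
          rw [Matrix.mulVec_smul, Matrix.mulVec_add]
        intro j hj
        rw [Function.mem_support, hBm] at hj
        simp only [Pi.smul_apply, Pi.add_apply, smul_eq_mul] at hj
        by_cases hx1 : B.mulVec xbar j = 0
        · have : B.mulVec q j ≠ 0 := by intro h; apply hj; rw [hx1, h]; ring
          exact hspec.1.2.2 this
        · exact hsuppB ▸ Function.mem_support.mpr hx1
    have hle : ‖xbar - w‖ ≤ ‖m - w‖ := hmin m hmS
    have hpar := parallelogram_law_with_norm ℝ (xbar - w) (q - w)
    have h2m : xbar - w + (q - w) = (2:ℝ) • (m - w) := by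
      rw [hmdef]; module
    have hnorm2m : ‖xbar - w + (q - w)‖ = 2 * ‖m - w‖ := by
      rw [h2m, norm_smul]; simp
    have hsub : xbar - w - (q - w) = xbar - q := by abel
    have hz : ‖xbar - q‖ ^ 2 ≤ 0 := by
      rw [hsub, hnorm2m, hdd] at hpar
      nlinarith [mul_self_le_mul_self (norm_nonneg (xbar - w)) hle, norm_nonneg (xbar - q)]
    have : xbar - q = 0 := by
      rw [← norm_le_zero_iff]
      nlinarith [norm_nonneg (xbar - q)]
    exact sub_eq_zero.mp this
  rw [hproj]
  exact ⟨heq, by rw [heq]⟩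

end
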